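/- arXiv:2510.03062 — 4 statements merged into one kernel-verified Lean document; each statement's English description precedes it below -/
import Mathlib

section
/- Let u, v, w : ℝ² → ℂ be smooth functions and let U(ζ), V(ζ) be the Lax-pair matrices of the vcmKdV equation built from (u, v, w). Then the zero-curvature equation ∂_t U(ζ) − ∂_x V(ζ) + U(ζ)V(ζ) − V(ζ)U(ζ) = 0 holds for every ζ ∈ ℂ if and only if q = (u, v, w)ᵀ satisfies the vcmKdV equation q_t + q_xxx + 3(q_x q† q + q q† q_x) = 0. -/
open Matrix Filter Topology

noncomputable section

/-- Partial derivative in the first (space) variable. -/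
def dX (f : ℝ × ℝ → ℂ) : ℝ × ℝ → ℂ := fun p => deriv (fun x => f (x, p.2)) p.1

/-- Partial derivative in the second (time) variable. -/
def dT (f : ℝ × ℝ → ℂ) : ℝ × ℝ → ℂ := fun p => deriv (fun t => f (p.1, t)) p.2

/-- Left-hand side of one component of the vcmKdV equation
`f_t + f_xxx + 3((q†q) f_x + (q†q_x) f)` for `q = (u,v,w)ᵀ`. -/
def vcmLHS (u v w f : ℝ × ℝ → ℂ) (p : ℝ × ℝ) : ℂ :=
  dT f p + dX (dX (dX f)) p
    + 3 * (((starRingEnd ℂ) (u p) * u p + (starRingEnd ℂ) (v p) * v p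
            + (starRingEnd ℂ) (w p) * w p) * dX f p
         + ((starRingEnd ℂ) (u p) * dX u p + (starRingEnd ℂ) (v p) * dX v p
            + (starRingEnd ℂ) (w p) * dX w p) * f p)

/-- The vector complex modified KdV equation
`q_t + q_xxx + 3(q_x q† q + q q† q_x) = 0` for `q = (u,v,w)ᵀ`. -/
def vcmKdVeq (u v w : ℝ × ℝ → ℂ) : Prop :=
  ∀ p : ℝ × ℝ, vcmLHS u v w u p = 0 ∧ vcmLHS u v w v p = 0 ∧ vcmLHS u v w w p = 0

/-- `J = diag(1, -1, -1, -1)`. -/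
def Jmat : Matrix (Fin 4) (Fin 4) ℂ := Matrix.diagonal ![1, -1, -1, -1]

/-- The potential matrix `Q` built from the entries `u, v, w`. -/
def Qmat (u v w : ℂ) : Matrix (Fin 4) (Fin 4) ℂ :=
  !![0, u, v, w;
     -((starRingEnd ℂ) u), 0, 0, 0;
     -((starRingEnd ℂ) v), 0, 0, 0;
     -((starRingEnd ℂ) w), 0, 0, 0]

/-- `U(ζ) = -iζJ + Q`. -/
def Umat (ζ u v w : ℂ) : Matrix (Fin 4) (Fin 4) ℂ :=
  (-Complex.I * ζ) • Jmat + Qmat u v w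

/-- `V(ζ) = -4iζ³J + 4ζ²Q - 2iζ(Q² + Q_x)J + (-Q_xx + 2Q³ + Q_x Q - Q Q_x)`. -/
def Vmat (ζ u v w ux vx wx uxx vxx wxx : ℂ) : Matrix (Fin 4) (Fin 4) ℂ :=
  (-4 * Complex.I * ζ ^ 3) • Jmat + (4 * ζ ^ 2) • Qmat u v w
    - (2 * Complex.I * ζ) • ((Qmat u v w ^ 2 + Qmat ux vx wx) * Jmat)
    + (-Qmat uxx vxx wxx + 2 * Qmat u v w ^ 3
        + Qmat ux vx wx * Qmat u v w - Qmat u v w * Qmat ux vx wx)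

/-- `U(ζ)` as a matrix-valued field on `ℝ²`. -/
def Ufield (u v w : ℝ × ℝ → ℂ) (ζ : ℂ) (p : ℝ × ℝ) : Matrix (Fin 4) (Fin 4) ℂ :=
  Umat ζ (u p) (v p) (w p)

/-- `V(ζ)` as a matrix-valued field on `ℝ²` (with `Q_x`, `Q_xx` the entrywise derivatives). -/
def Vfield (u v w : ℝ × ℝ → ℂ) (ζ : ℂ) (p : ℝ × ℝ) : Matrix (Fin 4) (Fin 4) ℂ :=
  Vmat ζ (u p) (v p) (w p) (dX u p) (dX v p) (dX w p)
    (dX (dX u) p) (dX (dX v) p) (dX (dX w) p)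

/-- Entrywise `x`-derivative of a matrix-valued field. -/
def dXM (F : ℝ × ℝ → Matrix (Fin 4) (Fin 4) ℂ) (p : ℝ × ℝ) : Matrix (Fin 4) (Fin 4) ℂ :=
  Matrix.of fun i j => deriv (fun x => F (x, p.2) i j) p.1

/-- Entrywise `t`-derivative of a matrix-valued field. -/
def dTM (F : ℝ × ℝ → Matrix (Fin 4) (Fin 4) ℂ) (p : ℝ × ℝ) : Matrix (Fin 4) (Fin 4) ℂ :=
  Matrix.of fun i j => deriv (fun t => F (p.1, t) i j) p.2

/-- `Ψ` solves the Lax pair `Ψ_x = U(ζ)Ψ`, `Ψ_t = V(ζ)Ψ` with potentials `(u,v,w)`. -/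
def SolvesLax (u v w : ℝ × ℝ → ℂ) (ζ : ℂ) (Ψ : ℝ × ℝ → Fin 4 → ℂ) : Prop :=
  ∀ p : ℝ × ℝ,
    HasDerivAt (fun x => Ψ (x, p.2)) ((Ufield u v w ζ p).mulVec (Ψ p)) p.1 ∧
    HasDerivAt (fun t => Ψ (p.1, t)) ((Vfield u v w ζ p).mulVec (Ψ p)) p.2

/-- The rank-one projection `ψψ†/(ψ†ψ)`. -/
def projOf (ψ : Fin 4 → ℂ) : Matrix (Fin 4) (Fin 4) ℂ :=
  (star ψ ⬝ᵥ ψ)⁻¹ • vecMulVec ψ (star ψ)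

/-- One-fold Darboux matrix `T(ζ) = I - ((ζ₁ - ζ₁*)/(ζ - ζ₁*)) ψψ†/(ψ†ψ)`. -/
def Tone (ζ₁ ζ : ℂ) (ψ : Fin 4 → ℂ) : Matrix (Fin 4) (Fin 4) ℂ :=
  1 - ((ζ₁ - (starRingEnd ℂ) ζ₁) / (ζ - (starRingEnd ℂ) ζ₁)) • projOf ψ

/-- Transformed potential `f - 2i(ζ₁ - ζ₁*) Ψ₁⁰ (Ψ₁ʲ)* / (Ψ₁†Ψ₁)` of the one-fold DT. -/
def u1of (f : ℝ × ℝ → ℂ) (ζ₁ : ℂ) (Ψ₁ : ℝ × ℝ → Fin 4 → ℂ) (j : Fin 4) : ℝ × ℝ → ℂ :=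
  fun p => f p - 2 * Complex.I * (ζ₁ - (starRingEnd ℂ) ζ₁) * Ψ₁ p 0
      * (starRingEnd ℂ) (Ψ₁ p j) / (star (Ψ₁ p) ⬝ᵥ Ψ₁ p)

/-- The iterated eigenfunctions `Ψ_i^{(k)}` of the `N`-fold Darboux recursion
(0-based indexing: `PsiIter ζs Ψs k i = Ψ_{i+1}^{(k)}`). -/
def PsiIter (ζs : ℕ → ℂ) (Ψs : ℕ → ℝ × ℝ → Fin 4 → ℂ) : ℕ → ℕ → ℝ × ℝ → Fin 4 → ℂ
  | 0, i => Ψs i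
  | k + 1, i => fun p =>
      (Tone (ζs k) (ζs i) (PsiIter ζs Ψs k k p)).mulVec (PsiIter ζs Ψs k i p)

/-- The product `T_N(ζ) = T[N](ζ) ⋯ T[1](ζ)` of the `N`-fold Darboux recursion. -/
def TNmat (ζs : ℕ → ℂ) (Ψs : ℕ → ℝ × ℝ → Fin 4 → ℂ) :
    ℕ → ℂ → ℝ × ℝ → Matrix (Fin 4) (Fin 4) ℂ
  | 0, _, _ => 1
  | k + 1, ζ, p => Tone (ζs k) ζ (PsiIter ζs Ψs k k p) * TNmat ζs Ψs k ζ p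

/-- The explicit eigenfunction of the Lax pair for the zero seed at eigenvalue `ζk`. -/
def seedPsi (ζk : ℂ) (c₁ c₂ c₃ : ℝ) (p : ℝ × ℝ) : Fin 4 → ℂ :=
  ![Complex.exp (-Complex.I * ζk * (4 * p.2 * ζk ^ 2 + p.1)),
    c₁ * Complex.exp (Complex.I * ζk * (4 * p.2 * ζk ^ 2 + p.1)),
    c₂ * Complex.exp (Complex.I * ζk * (4 * p.2 * ζk ^ 2 + p.1)),
    c₃ * Complex.exp (Complex.I * ζk * (4 * p.2 * ζk ^ 2 + p.1))]

/-- The `N×N` matrix `M` with entries `M_{jk} = Ψ_j†Ψ_k/(ζ_k - ζ_j*)`. -/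
def MmatOf {N : ℕ} (ζs : Fin N → ℂ) (Ψs : Fin N → ℝ × ℝ → Fin 4 → ℂ) (p : ℝ × ℝ) :
    Matrix (Fin N) (Fin N) ℂ :=
  Matrix.of fun j k => (star (Ψs j p) ⬝ᵥ Ψs k p) / (ζs k - (starRingEnd ℂ) (ζs j))

/-- The `4×N` matrix `X = (Ψ₁, …, Ψ_N)` whose columns are the eigenfunctions. -/
def XmatOf {N : ℕ} (Ψs : Fin N → ℝ × ℝ → Fin 4 → ℂ) (p : ℝ × ℝ) :
    Matrix (Fin 4) (Fin N) ℂ :=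
  Matrix.of fun a j => Ψs j p a

/-- `M` bordered on the right by the column `c` and at the bottom by the row `(r, 0)`. -/
def bordered {N : ℕ} (M : Matrix (Fin N) (Fin N) ℂ) (c r : Fin N → ℂ) :
    Matrix (Fin (N + 1)) (Fin (N + 1)) ℂ :=
  Matrix.of fun i j =>
    Fin.lastCases
      (Fin.lastCases (0 : ℂ) (fun j' => r j') j)
      (fun i' => Fin.lastCases (c i') (fun j' => M i' j') j)
      i

/-!
With `a = -iζ` we have `U = aJ + Q` and `V = -4a³J - 4a²Q + 2a(Q² + Q_x)J + W`, where
`W = -Q_xx + 2Q³ + Q_xQ - QQ_x`. Since `J² = 1` and `J` anticommutes with `Q` and its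
`x`-derivatives, all `ζ`-dependent terms of `U_t - V_x + [U, V]` cancel, leaving
`Q_t + Q_xxx - 3(Q_xQ² + Q²Q_x)`. For `Q` built from `q = (u, v, w)ᵀ`, the matrix
`Q_xQ² + Q²Q_x` is again of this block form, built from `-(q†q) q_x - (q†q_x) q`; so the
zero-curvature matrix is the block matrix built from the left-hand side of the vcmKdV equation.
-/

open ComplexConjugate

section LaxPair

variable {R A : Type*} [CommRing R] [Ring A] [Algebra R A]

def laxV (a : R) (J Q Q₁ Q₂ : A) : A :=
  (-4 * a ^ 3) • J + (-4 * a ^ 2) • Q + (2 * a) • ((Q ^ 2 + Q₁) * J)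
    + (-Q₂ + 2 * Q ^ 3 + Q₁ * Q - Q * Q₁)

theorem laxV_zeroCurvature (a : R) {J Q Q₁ Q₂ : A} (Q₃ : A) (hJ : J * J = 1)
    (hQ : J * Q = -(Q * J)) (hQ₁ : J * Q₁ = -(Q₁ * J)) (hQ₂ : J * Q₂ = -(Q₂ * J)) :
    -((-4 * a ^ 2) • Q₁ + (2 * a) • ((Q * Q₁ + Q₁ * Q + Q₂) * J)
        + (-Q₃ + 2 * (Q ^ 2 * Q₁ + Q * Q₁ * Q + Q₁ * Q ^ 2) + Q₂ * Q - Q * Q₂))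
      + ((a • J + Q) * laxV a J Q Q₁ Q₂ - laxV a J Q Q₁ Q₂ * (a • J + Q))
      = Q₃ - 3 • (Q₁ * Q ^ 2 + Q ^ 2 * Q₁) := by
  have pushJ : ∀ {X : A}, J * X = -(X * J) → ∀ Y, J * (X * Y) = -(X * (J * Y)) := by
    intro X hX Y
    rw [← mul_assoc, hX, neg_mul, mul_assoc]
  simp only [laxV, pow_succ, pow_zero, one_mul, mul_add, add_mul, mul_sub, sub_mul, two_mul,
    smul_mul_assoc, mul_smul_comm, smul_add, smul_sub, smul_neg, mul_assoc, pushJ hQ, pushJ hQ₁,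
    hQ, hQ₁, hQ₂, hJ, mul_neg, neg_mul, neg_neg, mul_one]
  module

end LaxPair

theorem HasDerivAt.laxV {𝕜 R 𝔸 : Type*} [NontriviallyNormedField 𝕜] [CommRing R]
    [NormedRing 𝔸] [NormedAlgebra 𝕜 𝔸] [Algebra R 𝔸] [SMulCommClass 𝕜 R 𝔸]
    [ContinuousConstSMul R 𝔸]
    (a : R) (J : 𝔸) {Q Q₁ Q₂ : 𝕜 → 𝔸} {Q₃ : 𝔸} {x : 𝕜}
    (hQ : HasDerivAt Q (Q₁ x) x) (hQ₁ : HasDerivAt Q₁ (Q₂ x) x)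
    (hQ₂ : HasDerivAt Q₂ Q₃ x) :
    HasDerivAt (fun s => laxV a J (Q s) (Q₁ s) (Q₂ s))
      ((-4 * a ^ 2) • Q₁ x + (2 * a) • ((Q x * Q₁ x + Q₁ x * Q x + Q₂ x) * J)
        + (-Q₃ + 2 * (Q x ^ 2 * Q₁ x + Q x * Q₁ x * Q x + Q₁ x * Q x ^ 2)
          + Q₂ x * Q x - Q x * Q₂ x)) x := by
  have hsq := hQ.fun_pow' 2
  have hcube := hQ.fun_pow' 3
  simp only [Finset.sum_range_succ, Finset.sum_range_zero, Nat.pred_eq_sub_one] at hsq hcube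
  refine ((((hasDerivAt_const x ((-4 * a ^ 3) • J)).add (hQ.const_smul (-4 * a ^ 2))).add
    (((hsq.add hQ₁).mul_const J).const_smul (2 * a))).add
    ((((hQ₂.neg).add (hcube.const_mul 2)).add (hQ₁.mul hQ)).sub
      (hQ.mul hQ₁))).congr_deriv ?_
  simp only [zero_add, tsub_zero, tsub_self, Nat.reduceSub, pow_zero, pow_one, one_mul,
    mul_one]
  noncomm_ring

theorem Jmat_mul_Jmat : Jmat * Jmat = 1 := by
  ext i j
  fin_cases i <;> fin_cases j <;> simp [Jmat]

theorem Jmat_mul_Qmat (a b c : ℂ) : Jmat * Qmat a b c = -(Qmat a b c * Jmat) := by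
  ext i j
  simp only [Jmat, Matrix.diagonal_mul, Matrix.neg_apply, Matrix.mul_diagonal]
  fin_cases i <;> fin_cases j <;> simp [Qmat]

theorem Vmat_eq_laxV (ζ u v w ux vx wx uxx vxx wxx : ℂ) :
    Vmat ζ u v w ux vx wx uxx vxx wxx
      = laxV (-Complex.I * ζ) Jmat (Qmat u v w) (Qmat ux vx wx) (Qmat uxx vxx wxx) := by
  have h₃ : -4 * Complex.I * ζ ^ 3 = -4 * (-Complex.I * ζ) ^ 3 := by
    linear_combination (-4 * Complex.I * ζ ^ 3) * Complex.I_sq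
  have h₂ : 4 * ζ ^ 2 = -4 * (-Complex.I * ζ) ^ 2 := by
    linear_combination (4 * ζ ^ 2) * Complex.I_sq
  rw [Vmat, laxV, h₃, h₂, sub_eq_add_neg _ ((2 * Complex.I * ζ) • _), ← neg_smul]
  congr 3
  ring

theorem Qmat_mul_sq_add_sq_mul (a b c a₁ b₁ c₁ : ℂ) :
    Qmat a₁ b₁ c₁ * Qmat a b c ^ 2 + Qmat a b c ^ 2 * Qmat a₁ b₁ c₁
      = -Qmat ((conj a * a + conj b * b + conj c * c) * a₁
                + (conj a * a₁ + conj b * b₁ + conj c * c₁) * a)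
              ((conj a * a + conj b * b + conj c * c) * b₁
                + (conj a * a₁ + conj b * b₁ + conj c * c₁) * b)
              ((conj a * a + conj b * b + conj c * c) * c₁
                + (conj a * a₁ + conj b * b₁ + conj c * c₁) * c) := by
  ext i j
  fin_cases i <;> fin_cases j <;> simp [Qmat, pow_two] <;> ring

theorem Qmat_eq_zero_iff {a b c : ℂ} : Qmat a b c = 0 ↔ a = 0 ∧ b = 0 ∧ c = 0 := by
  refine ⟨fun h => ⟨?_, ?_, ?_⟩, fun ⟨ha, hb, hc⟩ => ?_⟩
  · simpa [Qmat] using congrFun (congrFun h 0) 1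
  · simpa [Qmat] using congrFun (congrFun h 0) 2
  · simpa [Qmat] using congrFun (congrFun h 0) 3
  · ext i j
    fin_cases i <;> fin_cases j <;> simp [Qmat, ha, hb, hc]

theorem hasDerivAt_dX {f : ℝ × ℝ → ℂ} (hf : Differentiable ℝ f) (p : ℝ × ℝ) :
    HasDerivAt (fun x => f (x, p.2)) (dX f p) p.1 :=
  ((hf.comp (differentiable_id.prodMk (differentiable_const p.2))) p.1).hasDerivAt

theorem hasDerivAt_dT {f : ℝ × ℝ → ℂ} (hf : Differentiable ℝ f) (p : ℝ × ℝ) :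
    HasDerivAt (fun t => f (p.1, t)) (dT f p) p.2 :=
  ((hf.comp ((differentiable_const p.1).prodMk differentiable_id)) p.2).hasDerivAt

theorem contDiff_dX {f : ℝ × ℝ → ℂ} (hf : ContDiff ℝ (⊤ : ℕ∞) f) :
    ContDiff ℝ (⊤ : ℕ∞) (dX f) := by
  have h : dX f = fun p => fderiv ℝ f p (1, 0) := by
    funext p
    exact ((hf.differentiable (by simp) p).hasFDerivAt.comp_hasDerivAt p.1
      ((hasDerivAt_id p.1).prodMk (hasDerivAt_const p.1 p.2))).deriv
  rw [h]
  exact (hf.fderiv_right (mod_cast le_top)).clm_apply contDiff_const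

section MatrixCalculus

-- The operator norm makes square matrices a normed algebra, so the product rule applies.
attribute [local instance] Matrix.linftyOpNormedAddCommGroup Matrix.linftyOpNormedSpace
  Matrix.linftyOpNormedRing Matrix.linftyOpNormedAlgebra

theorem hasDerivAt_matrix_iff {𝕜 α m n : Type*} [NontriviallyNormedField 𝕜]
    [CompleteSpace 𝕜] [NormedAddCommGroup α] [NormedSpace 𝕜 α] [FiniteDimensional 𝕜 α]
    [Fintype m] [Fintype n] {F : 𝕜 → Matrix m n α} {F' : Matrix m n α} {x : 𝕜} :
    HasDerivAt F F' x ↔ ∀ i j, HasDerivAt (fun s => F s i j) (F' i j) x := by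
  let e := (Matrix.ofLinearEquiv 𝕜 (m := m) (n := n) (α := α)).symm.toContinuousLinearEquiv
  constructor
  · intro h i j
    exact hasDerivAt_pi.1 (hasDerivAt_pi.1 (e.hasFDerivAt.comp_hasDerivAt x h) i) j
  · intro h
    exact e.symm.hasFDerivAt.comp_hasDerivAt x
      (hasDerivAt_pi.2 fun i => hasDerivAt_pi.2 (h i))

theorem HasDerivAt.Qmat {a b c : ℝ → ℂ} {a' b' c' : ℂ} {x : ℝ} (ha : HasDerivAt a a' x)
    (hb : HasDerivAt b b' x) (hc : HasDerivAt c c' x) :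
    HasDerivAt (fun s => Qmat (a s) (b s) (c s)) (Qmat a' b' c') x := by
  rw [hasDerivAt_matrix_iff]
  intro i j
  fin_cases i <;> fin_cases j <;>
    first
      | exact hasDerivAt_const x (0 : ℂ)
      | exact ha | exact hb | exact hc
      | exact ha.star.neg | exact hb.star.neg | exact hc.star.neg

theorem dXM_eq_of_hasDerivAt {F : ℝ × ℝ → Matrix (Fin 4) (Fin 4) ℂ}
    {F' : Matrix (Fin 4) (Fin 4) ℂ} {p : ℝ × ℝ}
    (h : HasDerivAt (fun x => F (x, p.2)) F' p.1) : dXM F p = F' := by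
  ext i j
  exact (hasDerivAt_matrix_iff.1 h i j).deriv

theorem dTM_eq_of_hasDerivAt {F : ℝ × ℝ → Matrix (Fin 4) (Fin 4) ℂ}
    {F' : Matrix (Fin 4) (Fin 4) ℂ} {p : ℝ × ℝ}
    (h : HasDerivAt (fun t => F (p.1, t)) F' p.2) : dTM F p = F' := by
  ext i j
  exact (hasDerivAt_matrix_iff.1 h i j).deriv

theorem zeroCurvature_eq_Qmat_vcmLHS {u v w : ℝ × ℝ → ℂ} (hu : ContDiff ℝ (⊤ : ℕ∞) u)
    (hv : ContDiff ℝ (⊤ : ℕ∞) v) (hw : ContDiff ℝ (⊤ : ℕ∞) w) (ζ : ℂ) (p : ℝ × ℝ) :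
    dTM (fun q => Ufield u v w ζ q) p - dXM (fun q => Vfield u v w ζ q) p
        + Ufield u v w ζ p * Vfield u v w ζ p - Vfield u v w ζ p * Ufield u v w ζ p
      = Qmat (vcmLHS u v w u p) (vcmLHS u v w v p) (vcmLHS u v w w p) := by
  have hQx : ∀ {f g h : ℝ × ℝ → ℂ}, ContDiff ℝ (⊤ : ℕ∞) f → ContDiff ℝ (⊤ : ℕ∞) g →
      ContDiff ℝ (⊤ : ℕ∞) h →
        HasDerivAt (fun x => Qmat (f (x, p.2)) (g (x, p.2)) (h (x, p.2)))
          (Qmat (dX f p) (dX g p) (dX h p)) p.1 := fun hf hg hh =>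
    (hasDerivAt_dX (hf.differentiable (by simp)) p).Qmat
      (hasDerivAt_dX (hg.differentiable (by simp)) p)
      (hasDerivAt_dX (hh.differentiable (by simp)) p)
  have hUt : HasDerivAt (fun t => Ufield u v w ζ (p.1, t))
      (Qmat (dT u p) (dT v p) (dT w p)) p.2 :=
    ((hasDerivAt_dT (hu.differentiable (by simp)) p).Qmat
      (hasDerivAt_dT (hv.differentiable (by simp)) p)
      (hasDerivAt_dT (hw.differentiable (by simp)) p)).const_add _
  have hVx := (hQx hu hv hw).laxV (-Complex.I * ζ) Jmat
    (hQx (contDiff_dX hu) (contDiff_dX hv) (contDiff_dX hw))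
    (hQx (contDiff_dX (contDiff_dX hu)) (contDiff_dX (contDiff_dX hv))
      (contDiff_dX (contDiff_dX hw)))
  simp only [← Vmat_eq_laxV, Prod.mk.eta] at hVx
  rw [dTM_eq_of_hasDerivAt hUt, dXM_eq_of_hasDerivAt hVx, Ufield, Umat, Vfield, Vmat_eq_laxV,
    add_sub_assoc, sub_eq_add_neg, add_assoc,
    laxV_zeroCurvature _ _ Jmat_mul_Jmat (Jmat_mul_Qmat _ _ _) (Jmat_mul_Qmat _ _ _)
      (Jmat_mul_Qmat _ _ _),
    Qmat_mul_sq_add_sq_mul]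
  ext i j
  fin_cases i <;> fin_cases j <;> simp [Qmat, vcmLHS, map_ofNat] <;> ring

end MatrixCalculus

/-- the zero-curvature equation
`∂_t U(ζ) - ∂_x V(ζ) + U(ζ)V(ζ) - V(ζ)U(ζ) = 0` holds for all `ζ`
iff `(u,v,w)` solves the vcmKdV equation. -/
theorem zero_curvature_iff_vcmKdV (u v w : ℝ × ℝ → ℂ)
    (hu : ContDiff ℝ (⊤ : ℕ∞) u) (hv : ContDiff ℝ (⊤ : ℕ∞) v)
    (hw : ContDiff ℝ (⊤ : ℕ∞) w) :
    (∀ (ζ : ℂ) (p : ℝ × ℝ),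
        dTM (fun q => Ufield u v w ζ q) p - dXM (fun q => Vfield u v w ζ q) p
          + Ufield u v w ζ p * Vfield u v w ζ p
          - Vfield u v w ζ p * Ufield u v w ζ p = 0)
      ↔ vcmKdVeq u v w := by
  simp only [zeroCurvature_eq_Qmat_vcmLHS hu hv hw, Qmat_eq_zero_iff]
  exact ⟨fun h => h 0, fun h _ => h⟩
end
end

section
/- Under the N-fold Darboux recursion, at each fixed point (x, t) the product T_N(ζ) = T[N](ζ)⋯T[1](ζ), regarded as a rational matrix-valued function of ζ, admits the partial-fraction form T_N(ζ) = I − Σ_{i=1}^N D_i/(ζ − ζ_i*), where each D_i is a 4×4 complex matrix independent of ζ and of rank at most one. -/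
open Matrix Filter Topology

noncomputable section

/-! Each Darboux factor `T[k](ζ)` has a single simple pole, at `ζ_k*`, with rank-one residue.
Multiplying an expansion `1 - ∑ Dᵢ/(ζ - bᵢ)` by such a factor and splitting each product
`(ζ - ζ_k*)⁻¹ (ζ - bᵢ)⁻¹` into partial fractions (possible since the poles are distinct) gives an
expansion of the same shape, whose residues are products with a rank-≤1 factor. -/

lemma rank_projOf_le (ψ : Fin 4 → ℂ) : (projOf ψ).rank ≤ 1 := by
  rw [projOf, ← smul_vecMulVec]
  exact rank_vecMulVec_le _ _

section PartialFraction

variable {K ι : Type*} [Field K] [Fintype ι] [DecidableEq ι]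

lemma inv_sub_mul_div_sub_eq {a b c ζ : K} (ha : ζ ≠ a) (hb : ζ ≠ b) (hab : b ≠ a) :
    (ζ - b)⁻¹ * (c / (ζ - a)) = (ζ - b)⁻¹ * (c / (b - a)) - (ζ - a)⁻¹ * (c / (b - a)) := by
  have : ζ - a ≠ 0 := sub_ne_zero.2 ha
  have : ζ - b ≠ 0 := sub_ne_zero.2 hb
  have : b - a ≠ 0 := sub_ne_zero.2 hab
  field_simp
  ring

lemma one_sub_smul_mul_one_sub_sum_smul {κ : Type*} [Fintype κ]
    (P : Matrix ι ι K) (D : κ → Matrix ι ι K)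
    {a c ζ : K} {b : κ → K} (hb : ∀ i, b i ≠ a) (hζb : ∀ i, ζ ≠ b i) (hζa : ζ ≠ a) :
    (1 - (c / (ζ - a)) • P) * (1 - ∑ i, (ζ - b i)⁻¹ • D i)
      = 1 - (∑ i, (ζ - b i)⁻¹ • ((1 - (c / (b i - a)) • P) * D i)
             + (ζ - a)⁻¹ • (P * (c • 1 + ∑ i, (c / (b i - a)) • D i))) := by
  simp only [mul_sub, sub_mul, one_mul, mul_one, mul_add, Finset.mul_sum,
    smul_mul_assoc, mul_smul_comm, smul_smul, smul_sub, smul_add, Finset.smul_sum,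
    inv_sub_mul_div_sub_eq hζa (hζb _) (hb _), sub_smul, Finset.sum_sub_distrib]
  rw [div_eq_inv_mul]
  abel

def HasRankOnePartialFractions (b : ℕ → K) (n : ℕ) (T : K → Matrix ι ι K) : Prop :=
  ∃ D : Fin n → Matrix ι ι K, (∀ i, (D i).rank ≤ 1) ∧
    ∀ ζ, (∀ i : Fin n, ζ ≠ b i) → T ζ = 1 - ∑ i : Fin n, (ζ - b i)⁻¹ • D i

lemma hasRankOnePartialFractions_one (b : ℕ → K) :
    HasRankOnePartialFractions b 0 (fun _ => (1 : Matrix ι ι K)) :=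
  ⟨finZeroElim, finZeroElim, fun _ _ => by simp⟩

lemma HasRankOnePartialFractions.one_sub_smul_mul {b : ℕ → K} {n : ℕ} {T : K → Matrix ι ι K}
    (hT : HasRankOnePartialFractions b n T) {P : Matrix ι ι K} (hP : P.rank ≤ 1) (c : K)
    (hb : ∀ i < n, b i ≠ b n) :
    HasRankOnePartialFractions b (n + 1) (fun ζ => (1 - (c / (ζ - b n)) • P) * T ζ) := by
  obtain ⟨D, hD, hTD⟩ := hT
  refine ⟨Fin.lastCases (P * (c • 1 + ∑ i : Fin n, (c / (b i - b n)) • D i))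
    (fun i => (1 - (c / (b i - b n)) • P) * D i), fun i => ?_, fun ζ hζ => ?_⟩
  · cases i using Fin.lastCases with
    | last => simpa using (rank_mul_le_left _ _).trans hP
    | cast i => simpa using (rank_mul_le_right _ _).trans (hD i)
  · have hζb : ∀ i : Fin n, ζ ≠ b i := fun i => by simpa using hζ i.castSucc
    have hζn : ζ ≠ b n := by simpa using hζ (Fin.last n)
    dsimp only
    rw [hTD ζ hζb, one_sub_smul_mul_one_sub_sum_smul P D (fun i => hb i i.2) hζb hζn,
      Fin.sum_univ_castSucc]
    simp

end PartialFraction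

theorem TN_partial_fraction_general (N : ℕ) (ζs : ℕ → ℂ) (Ψs : ℕ → ℝ × ℝ → Fin 4 → ℂ)
    (hdist : ∀ i j, i < N → j < N → i ≠ j → ζs i ≠ ζs j) :
    ∀ p : ℝ × ℝ, ∃ D : Fin N → Matrix (Fin 4) (Fin 4) ℂ,
      (∀ i, (D i).rank ≤ 1) ∧
      ∀ ζ : ℂ, (∀ i : Fin N, ζ ≠ (starRingEnd ℂ) (ζs i.val)) →
        TNmat ζs Ψs N ζ p
          = 1 - ∑ i : Fin N, (ζ - (starRingEnd ℂ) (ζs i.val))⁻¹ • D i := by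
  intro p
  have hTN : ∀ n ≤ N,
      HasRankOnePartialFractions (fun i => starRingEnd ℂ (ζs i)) n (TNmat ζs Ψs n · p) := by
    intro n hn
    induction n with
    | zero => exact hasRankOnePartialFractions_one _
    | succ n ih =>
      refine (ih (by omega)).one_sub_smul_mul (rank_projOf_le _) _ fun i hi h => ?_
      exact hdist i n (by omega) (by omega) hi.ne ((starRingEnd ℂ).injective h)
  exact hTN N le_rfl

/-- at each fixed point, `T_N(ζ)` admits the partial-fraction form
`T_N(ζ) = I - Σ_{i=1}^N D_i/(ζ - ζ_i*)` with each `D_i` of rank at most one. -/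
theorem TN_partial_fraction (N : ℕ) (ζs : ℕ → ℂ) (Ψs : ℕ → ℝ × ℝ → Fin 4 → ℂ)
    (u v w : ℝ × ℝ → ℂ)
    (hu : ContDiff ℝ (⊤ : ℕ∞) u) (hv : ContDiff ℝ (⊤ : ℕ∞) v)
    (hw : ContDiff ℝ (⊤ : ℕ∞) w) (hsol : vcmKdVeq u v w)
    (hdist : ∀ i j, i < N → j < N → i ≠ j → ζs i ≠ ζs j)
    (hnc : ∀ i j, i < N → j < N → ζs i ≠ (starRingEnd ℂ) (ζs j))
    (hlax : ∀ i, i < N → SolvesLax u v w (ζs i) (Ψs i))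
    (hnz : ∀ i, i < N → ∀ p : ℝ × ℝ, Ψs i p ≠ 0)
    (hiter : ∀ k, k < N → ∀ p : ℝ × ℝ, PsiIter ζs Ψs k k p ≠ 0) :
    ∀ p : ℝ × ℝ, ∃ D : Fin N → Matrix (Fin 4) (Fin 4) ℂ,
      (∀ i, (D i).rank ≤ 1) ∧
      ∀ ζ : ℂ, (∀ i : Fin N, ζ ≠ (starRingEnd ℂ) (ζs i.val)) →
        TNmat ζs Ψs N ζ p
          = 1 - ∑ i : Fin N, (ζ - (starRingEnd ℂ) (ζs i.val))⁻¹ • D i :=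
  TN_partial_fraction_general N ζs Ψs hdist

end
end

section
/- Under the N-fold Darboux recursion, the product T_N(ζ) = T[N](ζ)⋯T[1](ζ) annihilates each seed eigenfunction at its own eigenvalue: T_N(ζ_j)Ψ_j = 0 for every j = 1, …, N and every (x, t) ∈ ℝ². -/
open Matrix Filter Topology

noncomputable section

lemma star_dotProduct_self_ne_zero {ψ : Fin 4 → ℂ} (h : ψ ≠ 0) :
    star ψ ⬝ᵥ ψ ≠ 0 := by
  intro h0
  apply h
  have key : ((∑ j, Complex.normSq (ψ j) : ℝ) : ℂ) = 0 := by
    rw [← h0]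
    simp [dotProduct, Complex.normSq_eq_conj_mul_self]
  rw [Complex.ofReal_eq_zero] at key
  ext i
  have := (Finset.sum_eq_zero_iff_of_nonneg
    (fun j _ => Complex.normSq_nonneg (ψ j))).mp key i (Finset.mem_univ i)
  simpa [Complex.normSq_eq_zero] using this

lemma Tone_annihilates {ζ₁ : ℂ} (hζ : ζ₁ ≠ (starRingEnd ℂ) ζ₁)
    {ψ : Fin 4 → ℂ} (hψ : ψ ≠ 0) : (Tone ζ₁ ζ₁ ψ).mulVec ψ = 0 := by
  have hd : star ψ ⬝ᵥ ψ ≠ 0 := star_dotProduct_self_ne_zero hψ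
  have hc : (ζ₁ - (starRingEnd ℂ) ζ₁) / (ζ₁ - (starRingEnd ℂ) ζ₁) = 1 :=
    div_self (sub_ne_zero.mpr hζ)
  have hproj : (projOf ψ).mulVec ψ = ψ := by
    unfold projOf
    rw [smul_mulVec]
    have : (vecMulVec ψ (star ψ)).mulVec ψ = (star ψ ⬝ᵥ ψ) • ψ := by
      ext i
      simp [vecMulVec, mulVec, dotProduct, Finset.mul_sum, mul_comm, mul_left_comm]
    rw [this, smul_smul, inv_mul_cancel₀ hd, one_smul]
  unfold Tone
  rw [hc, one_smul, sub_mulVec, one_mulVec, hproj, sub_self]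

lemma TNmat_mulVec_eq_PsiIter (ζs : ℕ → ℂ) (Ψs : ℕ → ℝ × ℝ → Fin 4 → ℂ)
    (k i : ℕ) (p : ℝ × ℝ) :
    (TNmat ζs Ψs k (ζs i) p).mulVec (Ψs i p) = PsiIter ζs Ψs k i p := by
  induction k with
  | zero => simp [TNmat, PsiIter]
  | succ k ih =>
      show ((Tone (ζs k) (ζs i) (PsiIter ζs Ψs k k p)) *
        TNmat ζs Ψs k (ζs i) p).mulVec (Ψs i p) = _
      rw [← mulVec_mulVec, ih]
      rfl

/-- `T_N(ζ_j)Ψ_j = 0` for every `j = 1, …, N` and every `(x,t)`. -/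
theorem TN_annihilates_seeds (N : ℕ) (ζs : ℕ → ℂ) (Ψs : ℕ → ℝ × ℝ → Fin 4 → ℂ)
    (u v w : ℝ × ℝ → ℂ)
    (hu : ContDiff ℝ (⊤ : ℕ∞) u) (hv : ContDiff ℝ (⊤ : ℕ∞) v)
    (hw : ContDiff ℝ (⊤ : ℕ∞) w) (hsol : vcmKdVeq u v w)
    (hdist : ∀ i j, i < N → j < N → i ≠ j → ζs i ≠ ζs j)
    (hnc : ∀ i j, i < N → j < N → ζs i ≠ (starRingEnd ℂ) (ζs j))
    (hlax : ∀ i, i < N → SolvesLax u v w (ζs i) (Ψs i))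
    (hnz : ∀ i, i < N → ∀ p : ℝ × ℝ, Ψs i p ≠ 0)
    (hiter : ∀ k, k < N → ∀ p : ℝ × ℝ, PsiIter ζs Ψs k k p ≠ 0) :
    ∀ j, j < N → ∀ p : ℝ × ℝ,
      (TNmat ζs Ψs N (ζs j) p).mulVec (Ψs j p) = 0 := by
  intro j hj p
  rw [TNmat_mulVec_eq_PsiIter]
  -- show PsiIter ζs Ψs k j p = 0 for all k > j with k ≤ N
  suffices h : ∀ k, j < k → k ≤ N → PsiIter ζs Ψs k j p = 0 from h N hj le_rfl
  intro k hjk hkN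
  induction k with
  | zero => omega
  | succ k ih =>
      rcases Nat.lt_or_ge j k with h' | h'
      · show (Tone (ζs k) (ζs j) (PsiIter ζs Ψs k k p)).mulVec
          (PsiIter ζs Ψs k j p) = 0
        rw [ih h' (by omega), mulVec_zero]
      · have hjk' : j = k := by omega
        subst hjk'
        show (Tone (ζs j) (ζs j) (PsiIter ζs Ψs j j p)).mulVec
          (PsiIter ζs Ψs j j p) = 0
        exact Tone_annihilates (hnc j j hj hj) (hiter j hj p)

end
end

section
/- (One-bright-bright-bright soliton.) Let ζ₁ = a₁ + ib₁ with a₁, b₁ ∈ ℝ, b₁ ≠ 0, let c₁, c₂, c₃ be real constants not all zero, and k = c₁² + c₂² + c₃². Define u[1](x,t) = (−i c₁(ζ₁ − ζ₁*)/√k) · exp(−4i(ζ₁ + ζ₁*)[(ζ₁² − ζ₁ζ₁* + (ζ₁*)²)t + x/4]) · sech(4i(ζ₁ − ζ₁*)[(ζ₁² + ζ₁ζ₁* + (ζ₁*)²)t + x/4] + (1/2)ln k), and let v[1], w[1] be given by the same formula with c₁ replaced by c₂ and by c₃ respectively (the sech argument is real, so these functions are smooth and bounded on ℝ²). Then (u[1],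 v[1], w[1]) is a global smooth solution of the vcmKdV equation. -/
open Matrix Filter Topology

noncomputable section

/-!
All three components are real multiples `κⱼ g` of one scalar sech soliton
`g = e^{i(αx + ωt)} sech(βx + γt + θ₀)` with `α = -2a₁`, `β = -2b₁`, `θ₀ = (ln k)/2`,
`κⱼ = 2b₁cⱼ/√k`. For such a vector the vcmKdV system collapses to the scalar complex mKdV
equation `g_t + g_xxx + 6K|g|²g_x = 0` with `K = Σ|κⱼ|²`, and here `K = β²`.
Every derivative of `g` is `g` times a polynomial in `tanh(βx + γt + θ₀)` (as `sech² = 1 - tanh²`),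
so the scalar equation becomes a polynomial identity in `tanh`, which holds exactly because of
the dispersion relation `ω = α³ - 3αβ²`, `γ = 3α²β - β³`.
-/

open Complex Polynomial

theorem Real.hasDerivAt_tanh (x : ℝ) : HasDerivAt Real.tanh (1 - Real.tanh x ^ 2) x := by
  have h := (Real.hasDerivAt_sinh x).div (Real.hasDerivAt_cosh x) (Real.cosh_pos x).ne'
  rw [show Real.sinh / Real.cosh = Real.tanh from
    funext fun y => (Real.tanh_eq_sinh_div_cosh y).symm] at h
  refine h.congr_deriv ?_
  rw [Real.tanh_eq_sinh_div_cosh]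
  field_simp

section SechWave

variable (a a₀ b b₀ : ℝ)

def sechWave (y : ℝ) : ℂ := cexp (↑(a * y + a₀) * I) / ↑(Real.cosh (b * y + b₀))

def sechWaveTanh (y : ℝ) : ℂ := ↑(Real.tanh (b * y + b₀))

def sechWaveDeriv (P : ℂ[X]) : ℂ[X] :=
  (C (a * I) - C (b : ℂ) * X) * P + C (b : ℂ) * (1 - X ^ 2) * derivative P

theorem hasDerivAt_sechWaveTanh (y : ℝ) :
    HasDerivAt (sechWaveTanh b b₀) (b * (1 - sechWaveTanh b b₀ y ^ 2)) y := by
  have h := (Real.hasDerivAt_tanh (b * y + b₀)).comp y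
    (((hasDerivAt_id y).const_mul b).add_const b₀)
  refine h.ofReal_comp.congr_deriv ?_
  simp [sechWaveTanh, mul_comm]

theorem hasDerivAt_sechWave (y : ℝ) :
    HasDerivAt (sechWave a a₀ b b₀)
      (sechWave a a₀ b b₀ y * (a * I - b * sechWaveTanh b b₀ y)) y := by
  have hθ : HasDerivAt (fun y : ℝ => b * y + b₀) b y := by
    simpa using ((hasDerivAt_id y).const_mul b).add_const b₀
  have hφ : HasDerivAt (fun y : ℝ => (↑(a * y + a₀) : ℂ) * I) (a * I) y := by
    simpa using (((hasDerivAt_id y).const_mul a).add_const a₀).ofReal_comp.mul_const I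
  have hc : HasDerivAt (fun y : ℝ => (↑(Real.cosh (b * y + b₀)) : ℂ))
      (↑(Real.sinh (b * y + b₀) * b)) y :=
    ((Real.hasDerivAt_cosh _).comp y hθ).ofReal_comp
  have hne : (↑(Real.cosh (b * y + b₀)) : ℂ) ≠ 0 := by
    exact_mod_cast (Real.cosh_pos _).ne'
  refine (hφ.cexp.div hc hne).congr_deriv ?_
  simp only [sechWave, sechWaveTanh, Real.tanh_eq_sinh_div_cosh, ofReal_div, ofReal_mul]
  generalize (↑(Real.cosh (b * y + b₀)) : ℂ) = C at hne ⊢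
  field_simp

theorem hasDerivAt_sechWave_mul_eval (P : ℂ[X]) (y : ℝ) :
    HasDerivAt (fun y => sechWave a a₀ b b₀ y * P.eval (sechWaveTanh b b₀ y))
      (sechWave a a₀ b b₀ y * (sechWaveDeriv a b P).eval (sechWaveTanh b b₀ y)) y := by
  have hP := (P.hasDerivAt (sechWaveTanh b b₀ y)).comp y (hasDerivAt_sechWaveTanh b b₀ y)
  refine ((hasDerivAt_sechWave a a₀ b b₀ y).mul hP).congr_deriv ?_
  simp only [sechWaveDeriv, Function.comp_apply, eval_add, eval_mul, eval_sub, eval_C, eval_X,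
    eval_pow, eval_one]
  ring

end SechWave

def cmKdVeq (K : ℝ) (g : ℝ × ℝ → ℂ) : Prop :=
  ∀ p : ℝ × ℝ, dT g p + dX (dX (dX g)) p + 6 * K * ((starRingEnd ℂ) (g p) * g p) * dX g p = 0

section SechSoliton

variable (α β θ₀ : ℝ)

def sechSoliton (p : ℝ × ℝ) : ℂ :=
  cexp (((α * p.1 + (α ^ 3 - 3 * α * β ^ 2) * p.2 : ℝ) : ℂ) * I)
    / ((Real.cosh (β * p.1 + (3 * α ^ 2 * β - β ^ 3) * p.2 + θ₀) : ℝ) : ℂ)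

def sechSolitonTanh (p : ℝ × ℝ) : ℂ :=
  ((Real.tanh (β * p.1 + (3 * α ^ 2 * β - β ^ 3) * p.2 + θ₀) : ℝ) : ℂ)

theorem sechSoliton_slice_fst (t : ℝ) :
    (fun x => sechSoliton α β θ₀ (x, t))
      = sechWave α ((α ^ 3 - 3 * α * β ^ 2) * t) β ((3 * α ^ 2 * β - β ^ 3) * t + θ₀) ∧
    (fun x => sechSolitonTanh α β θ₀ (x, t))
      = sechWaveTanh β ((3 * α ^ 2 * β - β ^ 3) * t + θ₀) := by
  constructor <;> funext x <;>
    simp only [sechSoliton, sechSolitonTanh, sechWave, sechWaveTanh, add_assoc]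

theorem sechSoliton_slice_snd (x : ℝ) :
    (fun t => sechSoliton α β θ₀ (x, t))
      = sechWave (α ^ 3 - 3 * α * β ^ 2) (α * x) (3 * α ^ 2 * β - β ^ 3) (β * x + θ₀) ∧
    (fun t => sechSolitonTanh α β θ₀ (x, t))
      = sechWaveTanh (3 * α ^ 2 * β - β ^ 3) (β * x + θ₀) := by
  constructor <;> funext t <;> simp only [sechSoliton, sechSolitonTanh, sechWave, sechWaveTanh] <;>
    ring_nf

theorem dX_sechSoliton_mul_eval (P : ℂ[X]) :
    dX (fun p => sechSoliton α β θ₀ p * P.eval (sechSolitonTanh α β θ₀ p))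
      = fun p =>
        sechSoliton α β θ₀ p * (sechWaveDeriv α β P).eval (sechSolitonTanh α β θ₀ p) := by
  funext ⟨x, t⟩
  obtain ⟨hg, hT⟩ := sechSoliton_slice_fst α β θ₀ t
  have h := (hasDerivAt_sechWave_mul_eval α ((α ^ 3 - 3 * α * β ^ 2) * t) β
    ((3 * α ^ 2 * β - β ^ 3) * t + θ₀) P x).deriv
  simp only [dX, ← hg, ← hT] at h ⊢
  exact h

theorem dT_sechSoliton (p : ℝ × ℝ) :
    dT (sechSoliton α β θ₀) p = sechSoliton α β θ₀ p
      * (sechWaveDeriv (α ^ 3 - 3 * α * β ^ 2) (3 * α ^ 2 * β - β ^ 3) 1).eval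
          (sechSolitonTanh α β θ₀ p) := by
  obtain ⟨x, t⟩ := p
  obtain ⟨hg, hT⟩ := sechSoliton_slice_snd α β θ₀ x
  have h := (hasDerivAt_sechWave_mul_eval (α ^ 3 - 3 * α * β ^ 2) (α * x)
    (3 * α ^ 2 * β - β ^ 3) (β * x + θ₀) 1 t).deriv
  simp only [dT, eval_one, mul_one, ← hg, ← hT] at h ⊢
  exact h

theorem conj_sechSoliton_mul_self (p : ℝ × ℝ) :
    (starRingEnd ℂ) (sechSoliton α β θ₀ p) * sechSoliton α β θ₀ p
      = 1 - sechSolitonTanh α β θ₀ p ^ 2 := by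
  set θ := β * p.1 + (3 * α ^ 2 * β - β ^ 3) * p.2 + θ₀
  have hphase : ∀ r : ℝ, (starRingEnd ℂ) (cexp (r * I)) * cexp (r * I) = 1 := fun r => by
    rw [← exp_conj, ← exp_add]; simp
  have hC : (Real.cosh θ : ℂ) ≠ 0 := by exact_mod_cast (Real.cosh_pos θ).ne'
  have hCS : (Real.cosh θ : ℂ) ^ 2 - (Real.sinh θ : ℂ) ^ 2 = 1 := by
    exact_mod_cast Real.cosh_sq_sub_sinh_sq θ
  simp only [sechSoliton, sechSolitonTanh, map_div₀, conj_ofReal, Real.tanh_eq_sinh_div_cosh,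
    ofReal_div]
  rw [div_mul_div_comm, hphase]
  generalize (Real.cosh θ : ℂ) = C at *
  generalize (Real.sinh θ : ℂ) = S at *
  field_simp
  linear_combination -hCS

theorem contDiff_sechSoliton {n : WithTop ℕ∞} : ContDiff ℝ n (sechSoliton α β θ₀) := by
  have hofReal : ContDiff ℝ n ((↑) : ℝ → ℂ) := ofRealCLM.contDiff
  unfold sechSoliton
  simp only [div_eq_mul_inv, ← ofReal_inv]
  fun_prop (disch := exact fun p => (Real.cosh_pos _).ne')

theorem sechSoliton_cmKdVeq : cmKdVeq (β ^ 2) (sechSoliton α β θ₀) := by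
  have hdX := dX_sechSoliton_mul_eval α β θ₀ 1
  simp only [eval_one, mul_one] at hdX
  intro p
  rw [dT_sechSoliton, hdX, dX_sechSoliton_mul_eval, dX_sechSoliton_mul_eval,
    conj_sechSoliton_mul_self]
  simp only [sechWaveDeriv, derivative_mul, derivative_sub, derivative_add, derivative_C,
    derivative_X, derivative_one, derivative_zero, derivative_X_pow, eval_add, eval_mul, eval_sub,
    eval_C, eval_X, eval_pow, eval_one, eval_zero]
  push_cast
  linear_combination sechSoliton α β θ₀ p * (α ^ 3 * I - 3 * α ^ 2 * β * sechSolitonTanh α β θ₀ p)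
    * I_sq

end SechSoliton

theorem dX_const_mul (κ : ℂ) (g : ℝ × ℝ → ℂ) : dX (fun p => κ * g p) = fun p => κ * dX g p := by
  funext p
  exact deriv_const_mul_field κ

theorem dT_const_mul (κ : ℂ) (g : ℝ × ℝ → ℂ) : dT (fun p => κ * g p) = fun p => κ * dT g p := by
  funext p
  exact deriv_const_mul_field κ

theorem vcmKdVeq_of_cmKdVeq {g : ℝ × ℝ → ℂ} (κ₁ κ₂ κ₃ : ℂ)
    (hg : cmKdVeq (‖κ₁‖ ^ 2 + ‖κ₂‖ ^ 2 + ‖κ₃‖ ^ 2) g) :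
    vcmKdVeq (fun p => κ₁ * g p) (fun p => κ₂ * g p) (fun p => κ₃ * g p) := by
  have hLHS : ∀ κ p, vcmLHS (fun p => κ₁ * g p) (fun p => κ₂ * g p) (fun p => κ₃ * g p)
      (fun p => κ * g p) p = κ * (dT g p + dX (dX (dX g)) p
        + 6 * ((‖κ₁‖ ^ 2 + ‖κ₂‖ ^ 2 + ‖κ₃‖ ^ 2 : ℝ) : ℂ)
          * ((starRingEnd ℂ) (g p) * g p) * dX g p) := fun κ p => by
    simp only [vcmLHS, dX_const_mul, dT_const_mul, map_mul]
    push_cast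
    simp only [← Complex.conj_mul']
    ring
  intro p
  refine ⟨?_, ?_, ?_⟩ <;> rw [hLHS, hg p, mul_zero]

/-- The component `u[1]` of the one-bright soliton, with `c` in place of `c₁`. -/
def oneBrightComponent (ζ : ℂ) (k c : ℝ) (p : ℝ × ℝ) : ℂ :=
  -Complex.I * c * (ζ - (starRingEnd ℂ) ζ) / (Real.sqrt k : ℂ)
      * Complex.exp (-4 * Complex.I * (ζ + (starRingEnd ℂ) ζ)
          * ((ζ ^ 2 - ζ * (starRingEnd ℂ) ζ + ((starRingEnd ℂ) ζ) ^ 2) * p.2 + p.1 / 4))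
      * (Complex.cosh (4 * Complex.I * (ζ - (starRingEnd ℂ) ζ)
          * ((ζ ^ 2 + ζ * (starRingEnd ℂ) ζ + ((starRingEnd ℂ) ζ) ^ 2) * p.2 + p.1 / 4)
          + (Real.log k : ℂ) / 2))⁻¹

theorem oneBrightComponent_eq (a b k c : ℝ) :
    oneBrightComponent (a + b * I) k c
      = fun p =>
        ((2 * b * c / Real.sqrt k : ℝ) : ℂ) * sechSoliton (-2 * a) (-2 * b) (Real.log k / 2) p := by
  funext p
  have hconj : (starRingEnd ℂ) (a + b * I) = a - b * I := by simp [conj_ofReal]; ring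
  simp only [oneBrightComponent, sechSoliton, hconj, div_eq_mul_inv, ofReal_cosh]
  push_cast
  rw [← mul_assoc]
  congr 2
  · linear_combination (-2 * b * c * (↑√k : ℂ)⁻¹) * I_sq
  · congr 1
    linear_combination (-24 * a * b ^ 2 * p.2 * I) * I_sq
  · congr 1
    linear_combination
      (24 * a ^ 2 * b * p.2 + 8 * b ^ 3 * p.2 * (I ^ 2 - 1) + 2 * b * p.1) * I_sq

theorem one_bright_soliton_solves_general (a₁ b₁ : ℝ) (c₁ c₂ c₃ : ℝ)
    (hc : ¬(c₁ = 0 ∧ c₂ = 0 ∧ c₃ = 0))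
    (k : ℝ) (hk : k = c₁ ^ 2 + c₂ ^ 2 + c₃ ^ 2)
    (ζ₁ : ℂ) (hζ : ζ₁ = (a₁ : ℂ) + (b₁ : ℂ) * Complex.I)
    (u1 v1 w1 : ℝ × ℝ → ℂ)
    (hu1 : u1 = fun p => -Complex.I * c₁ * (ζ₁ - (starRingEnd ℂ) ζ₁) / (Real.sqrt k : ℂ)
      * Complex.exp (-4 * Complex.I * (ζ₁ + (starRingEnd ℂ) ζ₁)
          * ((ζ₁ ^ 2 - ζ₁ * (starRingEnd ℂ) ζ₁ + ((starRingEnd ℂ) ζ₁) ^ 2) * p.2 + p.1 / 4))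
      * (Complex.cosh (4 * Complex.I * (ζ₁ - (starRingEnd ℂ) ζ₁)
          * ((ζ₁ ^ 2 + ζ₁ * (starRingEnd ℂ) ζ₁ + ((starRingEnd ℂ) ζ₁) ^ 2) * p.2 + p.1 / 4)
          + (Real.log k : ℂ) / 2))⁻¹)
    (hv1 : v1 = fun p => -Complex.I * c₂ * (ζ₁ - (starRingEnd ℂ) ζ₁) / (Real.sqrt k : ℂ)
      * Complex.exp (-4 * Complex.I * (ζ₁ + (starRingEnd ℂ) ζ₁)
          * ((ζ₁ ^ 2 - ζ₁ * (starRingEnd ℂ) ζ₁ + ((starRingEnd ℂ) ζ₁) ^ 2) * p.2 + p.1 / 4))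
      * (Complex.cosh (4 * Complex.I * (ζ₁ - (starRingEnd ℂ) ζ₁)
          * ((ζ₁ ^ 2 + ζ₁ * (starRingEnd ℂ) ζ₁ + ((starRingEnd ℂ) ζ₁) ^ 2) * p.2 + p.1 / 4)
          + (Real.log k : ℂ) / 2))⁻¹)
    (hw1 : w1 = fun p => -Complex.I * c₃ * (ζ₁ - (starRingEnd ℂ) ζ₁) / (Real.sqrt k : ℂ)
      * Complex.exp (-4 * Complex.I * (ζ₁ + (starRingEnd ℂ) ζ₁)
          * ((ζ₁ ^ 2 - ζ₁ * (starRingEnd ℂ) ζ₁ + ((starRingEnd ℂ) ζ₁) ^ 2) * p.2 + p.1 / 4))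
      * (Complex.cosh (4 * Complex.I * (ζ₁ - (starRingEnd ℂ) ζ₁)
          * ((ζ₁ ^ 2 + ζ₁ * (starRingEnd ℂ) ζ₁ + ((starRingEnd ℂ) ζ₁) ^ 2) * p.2 + p.1 / 4)
          + (Real.log k : ℂ) / 2))⁻¹) :
    ContDiff ℝ (⊤ : ℕ∞) u1 ∧ ContDiff ℝ (⊤ : ℕ∞) v1 ∧ ContDiff ℝ (⊤ : ℕ∞) w1 ∧
    vcmKdVeq u1 v1 w1 := by
  have hk₀ : 0 < k := by
    rw [hk]
    by_contra! h
    exact hc ⟨by nlinarith, by nlinarith, by nlinarith⟩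
  have hκ : ‖((2 * b₁ * c₁ / √k : ℝ) : ℂ)‖ ^ 2 + ‖((2 * b₁ * c₂ / √k : ℝ) : ℂ)‖ ^ 2
      + ‖((2 * b₁ * c₃ / √k : ℝ) : ℂ)‖ ^ 2 = (-2 * b₁) ^ 2 := by
    simp only [norm_real, Real.norm_eq_abs, sq_abs, div_pow, Real.sq_sqrt hk₀.le]
    field_simp
    rw [hk]
  subst hζ
  have hu : u1 = oneBrightComponent (a₁ + b₁ * I) k c₁ := hu1
  have hv : v1 = oneBrightComponent (a₁ + b₁ * I) k c₂ := hv1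
  have hw : w1 = oneBrightComponent (a₁ + b₁ * I) k c₃ := hw1
  have hsol := sechSoliton_cmKdVeq (-2 * a₁) (-2 * b₁) (Real.log k / 2)
  have hsmooth : ContDiff ℝ (⊤ : ℕ∞) (sechSoliton (-2 * a₁) (-2 * b₁) (Real.log k / 2)) :=
    contDiff_sechSoliton _ _ _
  rw [← hκ] at hsol
  simp only [hu, hv, hw, oneBrightComponent_eq]
  exact ⟨contDiff_const.mul hsmooth, contDiff_const.mul hsmooth, contDiff_const.mul hsmooth,
    vcmKdVeq_of_cmKdVeq _ _ _ hsol⟩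

/-- the one-bright-bright-bright soliton is a global smooth
solution of the vcmKdV equation. -/
theorem one_bright_soliton_solves (a₁ b₁ : ℝ) (hb : b₁ ≠ 0) (c₁ c₂ c₃ : ℝ)
    (hc : ¬(c₁ = 0 ∧ c₂ = 0 ∧ c₃ = 0))
    (k : ℝ) (hk : k = c₁ ^ 2 + c₂ ^ 2 + c₃ ^ 2)
    (ζ₁ : ℂ) (hζ : ζ₁ = (a₁ : ℂ) + (b₁ : ℂ) * Complex.I)
    (u1 v1 w1 : ℝ × ℝ → ℂ)
    (hu1 : u1 = fun p => -Complex.I * c₁ * (ζ₁ - (starRingEnd ℂ) ζ₁) / (Real.sqrt k : ℂ)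
      * Complex.exp (-4 * Complex.I * (ζ₁ + (starRingEnd ℂ) ζ₁)
          * ((ζ₁ ^ 2 - ζ₁ * (starRingEnd ℂ) ζ₁ + ((starRingEnd ℂ) ζ₁) ^ 2) * p.2 + p.1 / 4))
      * (Complex.cosh (4 * Complex.I * (ζ₁ - (starRingEnd ℂ) ζ₁)
          * ((ζ₁ ^ 2 + ζ₁ * (starRingEnd ℂ) ζ₁ + ((starRingEnd ℂ) ζ₁) ^ 2) * p.2 + p.1 / 4)
          + (Real.log k : ℂ) / 2))⁻¹)
    (hv1 : v1 = fun p => -Complex.I * c₂ * (ζ₁ - (starRingEnd ℂ) ζ₁) / (Real.sqrt k : ℂ)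
      * Complex.exp (-4 * Complex.I * (ζ₁ + (starRingEnd ℂ) ζ₁)
          * ((ζ₁ ^ 2 - ζ₁ * (starRingEnd ℂ) ζ₁ + ((starRingEnd ℂ) ζ₁) ^ 2) * p.2 + p.1 / 4))
      * (Complex.cosh (4 * Complex.I * (ζ₁ - (starRingEnd ℂ) ζ₁)
          * ((ζ₁ ^ 2 + ζ₁ * (starRingEnd ℂ) ζ₁ + ((starRingEnd ℂ) ζ₁) ^ 2) * p.2 + p.1 / 4)
          + (Real.log k : ℂ) / 2))⁻¹)
    (hw1 : w1 = fun p => -Complex.I * c₃ * (ζ₁ - (starRingEnd ℂ) ζ₁) / (Real.sqrt k : ℂ)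
      * Complex.exp (-4 * Complex.I * (ζ₁ + (starRingEnd ℂ) ζ₁)
          * ((ζ₁ ^ 2 - ζ₁ * (starRingEnd ℂ) ζ₁ + ((starRingEnd ℂ) ζ₁) ^ 2) * p.2 + p.1 / 4))
      * (Complex.cosh (4 * Complex.I * (ζ₁ - (starRingEnd ℂ) ζ₁)
          * ((ζ₁ ^ 2 + ζ₁ * (starRingEnd ℂ) ζ₁ + ((starRingEnd ℂ) ζ₁) ^ 2) * p.2 + p.1 / 4)
          + (Real.log k : ℂ) / 2))⁻¹) :
    ContDiff ℝ (⊤ : ℕ∞) u1 ∧ ContDiff ℝ (⊤ : ℕ∞) v1 ∧ ContDiff ℝ (⊤ : ℕ∞) w1 ∧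
    vcmKdVeq u1 v1 w1 :=
  one_bright_soliton_solves_general a₁ b₁ c₁ c₂ c₃ hc k hk ζ₁ hζ u1 v1 w1 hu1 hv1 hw1

end
end
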